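/- For all subsets A, B ⊆ Fin n with A ∩ B = ∅, the binary-symmetric rate operator satisfies M_A·|B⟩ = |B ∪ A⟩ − |B⟩. -/

import Mathlib

/-!
Summing `X^(C)` over all `C ⊆ A`, including `C = ∅`, factors entrywise as `(X + 1)^(A)`, so
`𝔏_X^A = (X + 1)^(A) - 1`. On the factors in `A` the vector `|B⟩` sits in state `0`, and
`(L_α + 1) e₀ = e₁` while `(L_β + 1) e₀ = e₀`; hence `(L_α + 1)^(A)|B⟩ = |B ∪ A⟩` and
`(L_β + 1)^(A)|B⟩ = |B⟩`, which gives `M_A|B⟩ = (|B ∪ A⟩ - |B⟩) + (|B⟩ - |B⟩)`.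
-/

open Matrix


/-- The Markov generator `L_α = [[-1, 0], [1, 0]]`. -/
noncomputable def Lalpha : Matrix (Fin 2) (Fin 2) ℝ := !![-1, 0; 1, 0]

/-- The Markov generator `L_β = [[0, 1], [0, -1]]`. -/
noncomputable def Lbeta : Matrix (Fin 2) (Fin 2) ℝ := !![0, 1; 0, -1]

/-- `X^(A)`: the operator on the `n`-fold tensor power `(ℝ²)^⊗n` (indexed by functions
`Fin n → Fin 2`) acting as `X` on the tensor factors in `A` and as the identity elsewhere:
`(X^(A))_{f,g} = (∏_{i ∈ A} X_{f(i),g(i)}) · (∏_{j ∉ A} [f(j) = g(j)])`. -/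
noncomputable def opOn {n : ℕ} (X : Matrix (Fin 2) (Fin 2) ℝ) (A : Finset (Fin n)) :
    Matrix (Fin n → Fin 2) (Fin n → Fin 2) ℝ :=
  fun f g => (∏ i ∈ A, X (f i) (g i)) * ∏ j ∈ Aᶜ, (if f j = g j then (1 : ℝ) else 0)

/-- `𝔏_X^A := ∑_{∅ ≠ B ⊆ A} X^(B)`. -/
noncomputable def frakLA {n : ℕ} (X : Matrix (Fin 2) (Fin 2) ℝ) (A : Finset (Fin n)) :
    Matrix (Fin n → Fin 2) (Fin n → Fin 2) ℝ :=
  ∑ B ∈ A.powerset.filter (fun B => B.Nonempty), opOn X B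

/-- The binary-symmetric rate operator `M_A := 𝔏_α^A + 𝔏_β^A`. -/
noncomputable def MA {n : ℕ} (A : Finset (Fin n)) :
    Matrix (Fin n → Fin 2) (Fin n → Fin 2) ℝ :=
  frakLA Lalpha A + frakLA Lbeta A

/-- `|B⟩`: the standard basis vector of `ℝ^(Fin n → Fin 2)` at the indicator function of
`B ⊆ Fin n`. -/
noncomputable def ket {n : ℕ} (B : Finset (Fin n)) : (Fin n → Fin 2) → ℝ :=
  fun f => if f = (fun i => if i ∈ B then 1 else 0) then 1 else 0

open Finset

section

variable {n : ℕ}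

lemma opOn_empty (X : Matrix (Fin 2) (Fin 2) ℝ) : opOn X (∅ : Finset (Fin n)) = 1 := by
  ext f g
  simp only [opOn, prod_empty, one_mul, prod_boole, mem_univ, forall_const, one_apply,
    compl_empty, funext_iff]

lemma sum_powerset_opOn (X : Matrix (Fin 2) (Fin 2) ℝ) (A : Finset (Fin n)) :
    ∑ C ∈ A.powerset, opOn X C = opOn (X + 1) A := by
  ext f g
  simp only [opOn, Matrix.sum_apply, Matrix.add_apply, one_apply, prod_add, sum_mul]
  refine sum_congr rfl fun C hC => ?_
  rw [mul_assoc, ← prod_sdiff (compl_subset_compl.2 (mem_powerset.1 hC)), compl_sdiff_compl]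

lemma frakLA_eq_opOn_add_one_sub_one (X : Matrix (Fin 2) (Fin 2) ℝ) (A : Finset (Fin n)) :
    frakLA X A = opOn (X + 1) A - 1 := by
  have h : A.powerset.filter (fun C => C.Nonempty) = A.powerset.erase ∅ := by
    ext C
    simp [nonempty_iff_ne_empty, and_comm]
  rw [frakLA, h, sum_erase_eq_sub (empty_mem_powerset A), sum_powerset_opOn, opOn_empty]

lemma opOn_mulVec_single {Y : Matrix (Fin 2) (Fin 2) ℝ} {A : Finset (Fin n)}
    {g h : Fin n → Fin 2} (hY : ∀ i ∈ A, ∀ x, Y x (g i) = if x = h i then 1 else 0)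
    (hgh : ∀ j ∉ A, g j = h j) :
    opOn Y A *ᵥ Pi.single g 1 = Pi.single h 1 := by
  ext f
  rw [mulVec_single_one, col_apply, opOn, prod_congr rfl fun i hi => hY i hi (f i), prod_boole,
    prod_boole, ite_zero_mul_ite_zero, mul_one, Pi.single_apply]
  congr 1
  refine propext ⟨fun ⟨hA, hAc⟩ => funext fun j => ?_, fun hfh => ?_⟩
  · by_cases hj : j ∈ A
    · exact hA j hj
    · rw [hAc j (mem_compl.2 hj), hgh j hj]
  · exact ⟨fun i _ => congrFun hfh i, fun j hj => by rw [hfh, hgh j (mem_compl.1 hj)]⟩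

lemma ket_eq_single (B : Finset (Fin n)) :
    ket B = Pi.single (fun i => if i ∈ B then 1 else 0) 1 :=
  funext fun _ => (Pi.single_apply _ _ _).symm

end

/-- For `A, B ⊆ Fin n` with `A ∩ B = ∅`, `M_A·|B⟩ = |B ∪ A⟩ − |B⟩`. -/
theorem MA_ket_disjoint (n : ℕ) (A B : Finset (Fin n)) (h : A ∩ B = ∅) :
    (MA A).mulVec (ket B) = ket (B ∪ A) - ket B := by
  have hAB := disjoint_left.1 (disjoint_iff_inter_eq_empty.2 h)
  have hα : opOn (Lalpha + 1) A *ᵥ ket B = ket (B ∪ A) := by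
    rw [ket_eq_single, ket_eq_single]
    refine opOn_mulVec_single (fun i hi x => ?_) fun j hj => by simp [hj]
    fin_cases x <;> simp [hi, hAB hi, Lalpha]
  have hβ : opOn (Lbeta + 1) A *ᵥ ket B = ket B := by
    rw [ket_eq_single]
    refine opOn_mulVec_single (fun i hi x => ?_) fun _ _ => rfl
    fin_cases x <;> simp [hAB hi, Lbeta]
  rw [MA, frakLA_eq_opOn_add_one_sub_one, frakLA_eq_opOn_add_one_sub_one, add_mulVec, sub_mulVec,
    sub_mulVec, hα, hβ, one_mulVec]
  abel
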